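/- Let Λ be a finitely aligned k-graph with local periodicity m, n at v. Then there exist μ, ν, α ∈ Λ with r(μ) = r(ν) = v, s(μ) = s(ν) = r(α), d(μ) = m, d(ν) = n, and μαz = ναz for every boundary path z with r(z) = s(α). -/

import Mathlib

/-- A `k`-graph: a countable category `Λ` with a degree functor `d : Λ → ℕ^k`
satisfying the factorisation property. Morphisms form the type `Mor`,
objects (vertices) the type `Obj`. -/
structure KGraph (k : ℕ) where
  Obj : Type
  Mor : Type
  countableObj : Countable Obj
  countableMor : Countable Mor
  r : Mor → Obj
  s : Mor → Obj
  d : Mor → (Fin k → ℕ)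
  id : Obj → Mor
  comp : ∀ μ ν : Mor, s μ = r ν → Mor
  r_id : ∀ v, r (id v) = v
  s_id : ∀ v, s (id v) = v
  d_id : ∀ v, d (id v) = 0
  r_comp : ∀ μ ν h, r (comp μ ν h) = r μ
  s_comp : ∀ μ ν h, s (comp μ ν h) = s ν
  d_comp : ∀ μ ν h, d (comp μ ν h) = d μ + d ν
  id_comp : ∀ μ : Mor, comp (id (r μ)) μ (s_id (r μ)) = μ
  comp_id : ∀ μ : Mor, comp μ (id (s μ)) ((r_id (s μ)).symm) = μ
  assoc : ∀ (μ ν ρ : Mor) (h₁ : s μ = r ν) (h₂ : s ν = r ρ),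
    comp (comp μ ν h₁) ρ ((s_comp μ ν h₁).trans h₂)
      = comp μ (comp ν ρ h₂) (h₁.trans (r_comp ν ρ h₂).symm)
  factor : ∀ (lam : Mor) (m n : Fin k → ℕ), d lam = m + n →
    ∃! p : {q : Mor × Mor // s q.1 = r q.2},
      d p.val.1 = m ∧ d p.val.2 = n ∧ lam = comp p.val.1 p.val.2 p.property

namespace KGraph

variable {k : ℕ} (Λ : KGraph k)

/-- `μ` is an initial segment of `lam`, i.e. `lam = μρ` for some `ρ`. -/
def InitSeg (μ lam : Λ.Mor) : Prop :=
  ∃ (ρ : Λ.Mor) (h : Λ.s μ = Λ.r ρ), lam = Λ.comp μ ρ h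

/-- The set of minimal common extensions of `μ` and `ν`. -/
def MCE (μ ν : Λ.Mor) : Set Λ.Mor :=
  {lam | Λ.d lam = Λ.d μ ⊔ Λ.d ν ∧ Λ.InitSeg μ lam ∧ Λ.InitSeg ν lam}

/-- `Λ` is finitely aligned if all `MCE` sets are finite. -/
def FinitelyAligned : Prop := ∀ μ ν : Λ.Mor, (Λ.MCE μ ν).Finite

/-- Aperiodicity: distinct paths with the same source admit a common
extension `τ` with `MCE (ατ, βτ) = ∅`. -/
def Aperiodic : Prop :=
  ∀ α β : Λ.Mor, α ≠ β → Λ.s α = Λ.s β →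
    ∃ (τ : Λ.Mor) (hα : Λ.s α = Λ.r τ) (hβ : Λ.s β = Λ.r τ),
      Λ.MCE (Λ.comp α τ hα) (Λ.comp β τ hβ) = ∅

/-- `E` is a finite exhaustive subset of `vΛ`. -/
def IsFE (v : Λ.Obj) (E : Set Λ.Mor) : Prop :=
  E.Finite ∧ (∀ α ∈ E, Λ.r α = v) ∧
    ∀ μ : Λ.Mor, Λ.r μ = v → ∃ lam ∈ E, (Λ.MCE μ lam).Nonempty

/-- The segment `lam(p,q)` of a path `lam`, for `p ≤ q ≤ d lam`,
obtained from the factorisation property. -/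
noncomputable def seg (lam : Λ.Mor) (p q : Fin k → ℕ) (hpq : p ≤ q) (hq : q ≤ Λ.d lam) :
    Λ.Mor := by
  have h1 : Λ.d lam = p + (Λ.d lam - p) := by
    funext i; exact (Nat.add_sub_cancel' ((hpq.trans hq) i)).symm
  have hspec := (Λ.factor lam p (Λ.d lam - p) h1).exists.choose_spec
  refine (Λ.factor ((Λ.factor lam p (Λ.d lam - p) h1).exists.choose).val.2
      (q - p) (Λ.d lam - q) ?_).exists.choose.val.1
  rw [hspec.2.1]
  funext i
  have h3 : p i ≤ q i := hpq i
  have h4 : q i ≤ Λ.d lam i := hq i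
  simp only [Pi.sub_apply, Pi.add_apply]
  omega

/-- A (possibly infinite) path in `Λ`: a degree-preserving functor from
`Ω_{k,m}` (for `m = deg ∈ (ℕ ∪ {∞})^k`) to `Λ`, recorded by its segments. -/
structure InfPath (Λ : KGraph k) where
  deg : Fin k → ℕ∞
  seg : ∀ p q : Fin k → ℕ, p ≤ q → (∀ i, (q i : ℕ∞) ≤ deg i) → Λ.Mor
  d_seg : ∀ p q hpq hq, Λ.d (seg p q hpq hq) = q - p
  comp_seg : ∀ (p q r : Fin k → ℕ) (hpq : p ≤ q) (hqr : q ≤ r)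
      (hq : ∀ i, (q i : ℕ∞) ≤ deg i) (hr : ∀ i, (r i : ℕ∞) ≤ deg i),
    ∃ h : Λ.s (seg p q hpq hq) = Λ.r (seg q r hqr hr),
      Λ.comp (seg p q hpq hq) (seg q r hqr hr) h = seg p r (hpq.trans hqr) hr

/-- The vertex `x(n)` of an infinite path. -/
def InfPath.vert {Λ : KGraph k} (x : Λ.InfPath) (n : Fin k → ℕ) (hn : ∀ i, (n i : ℕ∞) ≤ x.deg i) : Λ.Obj :=
  Λ.r (x.seg n n le_rfl hn)

/-- The range `r(x) = x(0)` of an infinite path. -/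
def InfPath.rng {Λ : KGraph k} (x : Λ.InfPath) : Λ.Obj :=
  Λ.r (x.seg 0 0 le_rfl (fun i => by simp))

/-- `x` is a boundary path: it hits every finite exhaustive set. -/
def IsBoundary (x : Λ.InfPath) : Prop :=
  ∀ (n : Fin k → ℕ) (hn : ∀ i, (n i : ℕ∞) ≤ x.deg i) (E : Set Λ.Mor),
    Λ.IsFE (x.vert n hn) E →
    ∃ (p : Fin k → ℕ) (hp : ∀ i, ((n + p) i : ℕ∞) ≤ x.deg i),
      x.seg n (n + p) le_self_add hp ∈ E

/-- The set of boundary paths with range `v` is `v∂Λ`. -/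

private lemma enat_aux {a b : ℕ} {D : ℕ∞} (h2 : (a : ℕ∞) ≤ D) (h1 : (b : ℕ∞) ≤ D - a) :
    ((a + b : ℕ) : ℕ∞) ≤ D := by
  cases D with
  | top => exact le_top
  | coe dN =>
    have ha : a ≤ dN := by exact_mod_cast h2
    rw [← ENat.coe_sub] at h1
    have hb : b ≤ dN - a := by exact_mod_cast h1
    exact_mod_cast (by omega : a + b ≤ dN)

/-- The shifted path `σ^m(x)`. -/
def InfPath.shift {Λ : KGraph k} (x : Λ.InfPath) (m : Fin k → ℕ) (hm : ∀ i, (m i : ℕ∞) ≤ x.deg i) :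
    Λ.InfPath where
  deg := fun i => x.deg i - (m i : ℕ∞)
  seg := fun p q hpq hq => x.seg (m + p) (m + q) (add_le_add_right hpq m)
    (fun i => by
      have := enat_aux (hm i) (hq i)
      simpa using this)
  d_seg := fun p q hpq hq => by
    rw [x.d_seg]
    funext i
    simp only [Pi.sub_apply, Pi.add_apply]
    omega
  comp_seg := fun p q r hpq hqr hq hr =>
    x.comp_seg (m + p) (m + q) (m + r) (add_le_add_right hpq m) (add_le_add_right hqr m) _ _

/-- `w = lam · z` : the path `w` extends `z` by the finite path `lam`,
i.e. `w(0, d lam) = lam` and `σ^{d lam}(w) = z`. -/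
def InfPath.ExtendsBy {Λ : KGraph k} (w z : Λ.InfPath) (lam : Λ.Mor) : Prop :=
  ∃ h : ∀ i, ((Λ.d lam) i : ℕ∞) ≤ w.deg i,
    w.seg 0 (Λ.d lam) zero_le h = lam ∧ w.shift (Λ.d lam) h = z

/-- Local periodicity `m, n` at `v`. -/
def LocalPeriodicity (m n : Fin k → ℕ) (v : Λ.Obj) : Prop :=
  ∀ x : Λ.InfPath, Λ.IsBoundary x → x.rng = v →
    (∀ i, (((m ⊔ n) i : ℕ) : ℕ∞) ≤ x.deg i) ∧
    ∃ (hm : ∀ i, (m i : ℕ∞) ≤ x.deg i) (hn : ∀ i, (n i : ℕ∞) ≤ x.deg i),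
      x.shift m hm = x.shift n hn

/-- Cofinality of `Λ`, stated in terms of finite paths. -/
def Cofinal : Prop :=
  ∀ v w : Λ.Obj, ∃ E : Set Λ.Mor, Λ.IsFE w E ∧
    ∀ α ∈ E, ∃ lam : Λ.Mor, Λ.r lam = v ∧ Λ.s lam = Λ.s α

/-!
A boundary path `x ∈ v∂Λ` exists: enumerate the pairs `(n, F)`, `F` finite, so that each occurs
infinitely often, and grow a chain of finite paths from `v`, extending at each stage so that the
path meets `F` from position `n` whenever `F` is exhaustive at the vertex in position `n`. The
union of the chain is a boundary path.

Take `μ = x(0, m)`, `ν = x(0, n)`, `α = x(m, m ∨ n)`; as `σ^m x = σ^n x`,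
`s(ν) = x(n) = x(m) = r(α)`. Given `z ∈ s(α)∂Λ`, the path `w = μαz` is again a boundary path:
if `E` is finite exhaustive at `r(μ)`, finite alignment makes `Ext(μ; E)` finite exhaustive at
`s(μ)`, and a path meeting `Ext(μ; E)` becomes, after prepending `μ`, a path meeting `E`.
Hence `σ^m w = σ^n w`; since `σ^m w = αz` and `w(0, n) = x(0, n) = ν`, we get
`w = ν σ^n w = ναz`.
-/

lemma _root_.ENat.exists_le_of_natCast_le_iSup {ι : Type*} [Nonempty ι] {f : ι → ℕ} {n : ℕ}
    (h : (n : ℕ∞) ≤ ⨆ i, (f i : ℕ∞)) : ∃ i, n ≤ f i := by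
  by_contra! hlt
  have hsup : ⨆ i, (f i : ℕ∞) ≤ ((n - 1 : ℕ) : ℕ∞) :=
    iSup_le fun i => Nat.cast_le.2 (Nat.le_sub_one_of_lt (hlt i))
  have := Nat.cast_le.1 (h.trans hsup)
  have := hlt (Classical.arbitrary ι)
  omega

lemma _root_.exists_seq_infinite_fiber (α : Type*) [Countable α] [Nonempty α] :
    ∃ g : ℕ → α, ∀ a, {i | g i = a}.Infinite := by
  obtain ⟨f, hf⟩ := exists_surjective_nat (ℕ × α)
  refine ⟨fun i => (f i).2, fun a => Set.infinite_of_injective_forall_mem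
    (f := fun m => (hf (m, a)).choose) (fun m m' e => ?_) fun m => ?_⟩
  · have := (hf (m, a)).choose_spec
    rw [show (hf (m, a)).choose = (hf (m', a)).choose from e, (hf (m', a)).choose_spec,
      Prod.mk.injEq] at this
    exact this.1.symm
  · show (f _).2 = a
    rw [(hf (m, a)).choose_spec]

lemma comp_congr {μ ν μ' ν' : Λ.Mor} (hμ : μ = μ') (hν : ν = ν')
    (h : Λ.s μ = Λ.r ν) (h' : Λ.s μ' = Λ.r ν') :
    Λ.comp μ ν h = Λ.comp μ' ν' h' := by
  subst hμ hν; rfl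

lemma comp_assoc {μ ν ρ : Λ.Mor} (h₁ : Λ.s μ = Λ.r ν) (h₂ : Λ.s ν = Λ.r ρ)
    (h₃ : Λ.s (Λ.comp μ ν h₁) = Λ.r ρ) (h₄ : Λ.s μ = Λ.r (Λ.comp ν ρ h₂)) :
    Λ.comp (Λ.comp μ ν h₁) ρ h₃ = Λ.comp μ (Λ.comp ν ρ h₂) h₄ :=
  Λ.assoc μ ν ρ h₁ h₂

lemma comp_inj_of_d_eq {a b a' b' : Λ.Mor} (h : Λ.s a = Λ.r b) (h' : Λ.s a' = Λ.r b')
    (e : Λ.comp a b h = Λ.comp a' b' h') (hd : Λ.d a = Λ.d a') : a = a' ∧ b = b' := by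
  have hdb : Λ.d b = Λ.d b' := by
    have := Λ.d_comp a b h
    rw [e, Λ.d_comp, hd] at this
    exact (add_left_cancel this).symm
  have hsum : Λ.d (Λ.comp a b h) = Λ.d a + Λ.d b := Λ.d_comp a b h
  have := (Λ.factor _ _ _ hsum).unique (y₁ := ⟨(a, b), h⟩) (y₂ := ⟨(a', b'), h'⟩)
    ⟨rfl, rfl, rfl⟩ ⟨hd.symm, hdb.symm, e⟩
  simp only [Subtype.mk.injEq, Prod.mk.injEq] at this
  exact this

lemma comp_left_cancel {μ τ τ' : Λ.Mor} (h : Λ.s μ = Λ.r τ) (h' : Λ.s μ = Λ.r τ')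
    (e : Λ.comp μ τ h = Λ.comp μ τ' h') : τ = τ' :=
  (Λ.comp_inj_of_d_eq h h' e rfl).2

lemma eq_id_of_d_eq_zero {g : Λ.Mor} (hg : Λ.d g = 0) : g = Λ.id (Λ.r g) :=
  (Λ.comp_inj_of_d_eq (Λ.r_id (Λ.s g)).symm (by rw [Λ.s_id])
    ((Λ.comp_id g).trans (Λ.id_comp g).symm) (hg.trans (Λ.d_id _).symm)).1

lemma comp_eq_of_d_eq_zero {a b : Λ.Mor} (ha : Λ.d a = 0) (h : Λ.s a = Λ.r b) :
    Λ.comp a b h = b := by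
  have ha' := Λ.eq_id_of_d_eq_zero ha
  have hr : Λ.r a = Λ.r b := by rw [← h, ha', Λ.s_id, Λ.r_id]
  exact (Λ.comp_congr (ha'.trans (congrArg Λ.id hr)) rfl _ _).trans (Λ.id_comp b)

lemma initSeg_refl (a : Λ.Mor) : Λ.InitSeg a a :=
  ⟨Λ.id (Λ.s a), (Λ.r_id _).symm, (Λ.comp_id a).symm⟩

lemma initSeg_comp (μ ρ : Λ.Mor) (h : Λ.s μ = Λ.r ρ) : Λ.InitSeg μ (Λ.comp μ ρ h) :=
  ⟨ρ, h, rfl⟩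

section

variable {Λ}

lemma InitSeg.trans {a b c : Λ.Mor} (hab : Λ.InitSeg a b) (hbc : Λ.InitSeg b c) :
    Λ.InitSeg a c := by
  obtain ⟨ρ, h, rfl⟩ := hab
  obtain ⟨ρ', h', rfl⟩ := hbc
  have h₂ : Λ.s ρ = Λ.r ρ' := (Λ.s_comp a ρ h).symm.trans h'
  exact ⟨_, _, Λ.comp_assoc h h₂ h' (h.trans (Λ.r_comp ρ ρ' h₂).symm)⟩

lemma InitSeg.d_le {a b : Λ.Mor} (h : Λ.InitSeg a b) : Λ.d a ≤ Λ.d b := by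
  obtain ⟨ρ, hρ, rfl⟩ := h
  rw [Λ.d_comp]
  exact le_self_add

lemma InitSeg.r_eq {a b : Λ.Mor} (h : Λ.InitSeg a b) : Λ.r a = Λ.r b := by
  obtain ⟨ρ, hρ, rfl⟩ := h
  rw [Λ.r_comp]

lemma InitSeg.eq_of_d_eq {a b c : Λ.Mor} (ha : Λ.InitSeg a c) (hb : Λ.InitSeg b c)
    (hd : Λ.d a = Λ.d b) : a = b := by
  obtain ⟨ρ, h, rfl⟩ := ha
  obtain ⟨ρ', h', e⟩ := hb
  exact (Λ.comp_inj_of_d_eq h h' e hd).1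

end

/-- `b` is the segment `lam(p, q)`. -/
def IsSeg (lam : Λ.Mor) (p q : Fin k → ℕ) (b : Λ.Mor) : Prop :=
  Λ.d b = q - p ∧ ∃ (a : Λ.Mor) (h : Λ.s a = Λ.r b), Λ.d a = p ∧ Λ.InitSeg (Λ.comp a b h) lam

lemma isSeg_comp_right (a b : Λ.Mor) (h : Λ.s a = Λ.r b) :
    Λ.IsSeg (Λ.comp a b h) (Λ.d a) (Λ.d a + Λ.d b) b :=
  ⟨(add_tsub_cancel_left _ _).symm, a, h, rfl, Λ.initSeg_refl _⟩

lemma isSeg_zero_iff {lam b : Λ.Mor} {q : Fin k → ℕ} :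
    Λ.IsSeg lam 0 q b ↔ Λ.d b = q ∧ Λ.InitSeg b lam := by
  simp only [IsSeg, tsub_zero]
  refine and_congr_right fun _ => ⟨?_, fun h => ⟨_, Λ.s_id (Λ.r b), Λ.d_id _, ?_⟩⟩
  · rintro ⟨a, h, ha, hlam⟩
    rwa [Λ.comp_eq_of_d_eq_zero ha h] at hlam
  · rwa [Λ.id_comp]

lemma isSeg_comp (a b c : Λ.Mor) (h : Λ.s a = Λ.r b) (h' : Λ.s b = Λ.r c) :
    Λ.IsSeg (Λ.comp a (Λ.comp b c h') (h.trans (Λ.r_comp b c h').symm))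
      (Λ.d a) (Λ.d a + Λ.d b) b :=
  ⟨(add_tsub_cancel_left _ _).symm, a, h, rfl,
    ⟨c, (Λ.s_comp a b h).trans h', (Λ.comp_assoc h h' _ _).symm⟩⟩

lemma isSeg_seg (lam : Λ.Mor) (p q : Fin k → ℕ) (hpq : p ≤ q) (hq : q ≤ Λ.d lam) :
    Λ.IsSeg lam p q (Λ.seg lam p q hpq hq) := by
  have h₁ : Λ.d lam = p + (Λ.d lam - p) := (add_tsub_cancel_of_le (hpq.trans hq)).symm
  obtain ⟨hda, hdt, e₁⟩ := (Λ.factor lam p (Λ.d lam - p) h₁).exists.choose_spec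
  set t := (Λ.factor lam p (Λ.d lam - p) h₁).exists.choose
  have h₂ : Λ.d t.val.2 = (q - p) + (Λ.d lam - q) := by
    rw [hdt, ← tsub_add_tsub_cancel hq hpq, add_comm]
  obtain ⟨hdb, -, e₂⟩ := (Λ.factor t.val.2 (q - p) (Λ.d lam - q) h₂).exists.choose_spec
  set u := (Λ.factor t.val.2 (q - p) (Λ.d lam - q) h₂).exists.choose
  have hs : Λ.s t.val.1 = Λ.r u.val.1 := by rw [t.property, e₂, Λ.r_comp]
  have e : lam = Λ.comp t.val.1 (Λ.comp u.val.1 u.val.2 u.property)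
      (hs.trans (Λ.r_comp _ _ _).symm) := e₁.trans (Λ.comp_congr rfl e₂ _ _)
  change Λ.IsSeg lam p q u.val.1
  have hseg := Λ.isSeg_comp _ _ _ hs u.property
  rwa [← e, hda, hdb, add_tsub_cancel_of_le hpq] at hseg

section

variable {Λ}

lemma IsSeg.unique {lam b b' : Λ.Mor} {p q : Fin k → ℕ} (hb : Λ.IsSeg lam p q b)
    (hb' : Λ.IsSeg lam p q b') : b = b' := by
  obtain ⟨hd, a, h, ha, hlam⟩ := hb
  obtain ⟨hd', a', h', ha', hlam'⟩ := hb'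
  have hdab : Λ.d (Λ.comp a b h) = Λ.d (Λ.comp a' b' h') := by
    rw [Λ.d_comp, Λ.d_comp, ha, ha', hd, hd']
  exact (Λ.comp_inj_of_d_eq h h' (hlam.eq_of_d_eq hlam' hdab) (ha.trans ha'.symm)).2

lemma IsSeg.of_initSeg {lam lam' b : Λ.Mor} {p q : Fin k → ℕ} (hb : Λ.IsSeg lam p q b)
    (h : Λ.InitSeg lam lam') : Λ.IsSeg lam' p q b := by
  obtain ⟨hd, a, ha, hda, hlam⟩ := hb
  exact ⟨hd, a, ha, hda, hlam.trans h⟩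

lemma IsSeg.seg_eq {lam b : Λ.Mor} {p q : Fin k → ℕ} (hb : Λ.IsSeg lam p q b) (hpq : p ≤ q)
    (hq : q ≤ Λ.d lam) : Λ.seg lam p q hpq hq = b :=
  (Λ.isSeg_seg lam p q hpq hq).unique hb

lemma IsSeg.le_d {lam b : Λ.Mor} {p q : Fin k → ℕ} (hb : Λ.IsSeg lam p q b) (hpq : p ≤ q) :
    q ≤ Λ.d lam := by
  obtain ⟨hd, a, h, ha, hlam⟩ := hb
  have := hlam.d_le
  rwa [Λ.d_comp, ha, hd, add_tsub_cancel_of_le hpq] at this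

lemma IsSeg.split {lam b₁ b₂ : Λ.Mor} {p q r : Fin k → ℕ} (h : Λ.s b₁ = Λ.r b₂)
    (hb : Λ.IsSeg lam p r (Λ.comp b₁ b₂ h)) (hpq : p ≤ q) (hd : Λ.d b₁ = q - p) :
    Λ.IsSeg lam p q b₁ ∧ Λ.IsSeg lam q r b₂ := by
  obtain ⟨hdb, a, ha, hda, hlam⟩ := hb
  have ha₁ : Λ.s a = Λ.r b₁ := ha.trans (Λ.r_comp b₁ b₂ h)
  have e := Λ.comp_assoc ha₁ h ((Λ.s_comp a b₁ ha₁).trans h) ha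
  rw [← e] at hlam
  refine ⟨⟨hd, a, ha₁, hda, (Λ.initSeg_comp _ _ _).trans hlam⟩, ?_,
    Λ.comp a b₁ ha₁, (Λ.s_comp a b₁ ha₁).trans h, ?_, hlam⟩
  · rw [Λ.d_comp, hd] at hdb
    funext i
    have := congrFun hdb i
    have := hpq i
    simp only [Pi.add_apply, Pi.sub_apply] at *
    omega
  · rw [Λ.d_comp, hda, hd, add_tsub_cancel_of_le hpq]

end

lemma d_seg (lam : Λ.Mor) (p q : Fin k → ℕ) (hpq : p ≤ q) (hq : q ≤ Λ.d lam) :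
    Λ.d (Λ.seg lam p q hpq hq) = q - p :=
  (Λ.isSeg_seg lam p q hpq hq).1

lemma seg_eq_of_initSeg {lam lam' : Λ.Mor} (h : Λ.InitSeg lam lam') {p q : Fin k → ℕ}
    (hpq : p ≤ q) (hq : q ≤ Λ.d lam) (hq' : q ≤ Λ.d lam') :
    Λ.seg lam p q hpq hq = Λ.seg lam' p q hpq hq' :=
  (((Λ.isSeg_seg lam p q hpq hq).of_initSeg h).seg_eq hpq hq').symm

lemma seg_zero_of_initSeg {b lam : Λ.Mor} (h : Λ.InitSeg b lam) :
    Λ.seg lam 0 (Λ.d b) zero_le h.d_le = b :=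
  (Λ.isSeg_zero_iff.2 ⟨rfl, h⟩).seg_eq _ _

lemma r_seg_zero (lam : Λ.Mor) (q : Fin k → ℕ) (hq : q ≤ Λ.d lam) :
    Λ.r (Λ.seg lam 0 q zero_le hq) = Λ.r lam :=
  (Λ.isSeg_zero_iff.1 (Λ.isSeg_seg lam 0 q _ hq)).2.r_eq

lemma seg_comp (lam : Λ.Mor) {p q r : Fin k → ℕ} (hpq : p ≤ q) (hqr : q ≤ r)
    (hr : r ≤ Λ.d lam) :
    ∃ h : Λ.s (Λ.seg lam p q hpq (hqr.trans hr)) = Λ.r (Λ.seg lam q r hqr hr),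
      Λ.comp _ _ h = Λ.seg lam p r (hpq.trans hqr) hr := by
  have hd : Λ.d (Λ.seg lam p r (hpq.trans hqr) hr) = (q - p) + (r - q) := by
    rw [Λ.d_seg, add_comm, tsub_add_tsub_cancel hqr hpq]
  obtain ⟨⟨⟨b₁, b₂⟩, h⟩, ⟨hd₁, -, e⟩, -⟩ := Λ.factor _ _ _ hd
  have hseg := Λ.isSeg_seg lam p r (hpq.trans hqr) hr
  rw [e] at hseg
  obtain ⟨h₁, h₂⟩ := hseg.split h hpq hd₁
  rw [h₁.seg_eq hpq (hqr.trans hr), h₂.seg_eq hqr hr, e]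
  exact ⟨h, rfl⟩

lemma initSeg_seg (lam : Λ.Mor) {p q r : Fin k → ℕ} (hpq : p ≤ q) (hqr : q ≤ r)
    (hr : r ≤ Λ.d lam) :
    Λ.InitSeg (Λ.seg lam p q hpq (hqr.trans hr)) (Λ.seg lam p r (hpq.trans hqr) hr) := by
  obtain ⟨h, e⟩ := Λ.seg_comp lam hpq hqr hr
  exact e ▸ Λ.initSeg_comp _ _ h

lemma comp_seg_of_initSeg {μ lam : Λ.Mor} (hμ : Λ.InitSeg μ lam) {q : Fin k → ℕ}
    (hμq : Λ.d μ ≤ q) (hq : q ≤ Λ.d lam) :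
    ∃ h, Λ.comp μ (Λ.seg lam (Λ.d μ) q hμq hq) h = Λ.seg lam 0 q zero_le hq := by
  obtain ⟨h, e⟩ := Λ.seg_comp lam zero_le hμq hq
  have hseg := Λ.seg_zero_of_initSeg hμ
  exact ⟨(congrArg Λ.s hseg).symm.trans h, (Λ.comp_congr hseg.symm rfl _ _).trans e⟩

lemma seg_eq_of_eq_comp {κ μ σ : Λ.Mor} (h : Λ.s μ = Λ.r σ) (e : κ = Λ.comp μ σ h)
    (hμ : Λ.d μ ≤ Λ.d κ) : Λ.seg κ (Λ.d μ) (Λ.d κ) hμ le_rfl = σ := by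
  subst e
  have hseg := Λ.isSeg_comp_right μ σ h
  rw [← Λ.d_comp μ σ h] at hseg
  exact hseg.seg_eq _ _

/-- The set `Ext(μ; E)` of Raeburn–Sims–Yeend. -/
def Ext (μ : Λ.Mor) (E : Set Λ.Mor) : Set Λ.Mor :=
  {τ | ∃ h : Λ.s μ = Λ.r τ, ∃ lam ∈ E, Λ.comp μ τ h ∈ Λ.MCE μ lam}

lemma ext_finite (hFA : Λ.FinitelyAligned) (μ : Λ.Mor) {E : Set Λ.Mor} (hE : E.Finite) :
    (Λ.Ext μ E).Finite := by
  have := (hE.biUnion fun lam _ => hFA μ lam).to_subtype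
  refine Set.finite_coe_iff.1 (Finite.of_injective
    (fun τ : Λ.Ext μ E => (⟨Λ.comp μ τ τ.2.1, ?_⟩ : ↥(⋃ lam ∈ E, Λ.MCE μ lam))) ?_)
  · obtain ⟨-, lam, hlam, hmce⟩ := τ.2
    exact Set.mem_biUnion hlam hmce
  · intro τ τ' e
    exact Subtype.ext (Λ.comp_left_cancel _ _ (congrArg Subtype.val e))

lemma exists_mem_ext_mce_nonempty {μ ρ lam κ : Λ.Mor} (hρ : Λ.s μ = Λ.r ρ)
    (hκ : κ ∈ Λ.MCE (Λ.comp μ ρ hρ) lam) :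
    ∃ τ, (∃ h : Λ.s μ = Λ.r τ, Λ.comp μ τ h ∈ Λ.MCE μ lam) ∧ (Λ.MCE ρ τ).Nonempty := by
  obtain ⟨hdκ, ⟨θ, hθ, eκ⟩, hlamκ⟩ := hκ
  have hρθ : Λ.s ρ = Λ.r θ := (Λ.s_comp μ ρ hρ).symm.trans hθ
  have hμκ : Λ.InitSeg μ κ := (Λ.initSeg_comp μ ρ hρ).trans ⟨θ, hθ, eκ⟩
  rw [Λ.d_comp] at hdκ
  have hPQ : Λ.d μ ≤ Λ.d μ ⊔ Λ.d lam := le_sup_left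
  have hQR : Λ.d μ ⊔ Λ.d lam ≤ Λ.d κ := by
    rw [hdκ]; exact sup_le_sup_right le_self_add _
  set τ := Λ.seg κ (Λ.d μ) (Λ.d μ ⊔ Λ.d lam) hPQ hQR
  obtain ⟨h, e⟩ := Λ.comp_seg_of_initSeg hμκ hPQ hQR
  refine ⟨τ, ⟨h, ?_, Λ.initSeg_comp μ τ h, ?_⟩, Λ.seg κ (Λ.d μ) (Λ.d κ) (hPQ.trans hQR) le_rfl,
    ?_, ?_, ?_⟩
  · rw [e, Λ.d_seg, tsub_zero]
  · have hlam := Λ.initSeg_seg κ zero_le le_sup_right hQR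
    rwa [Λ.seg_zero_of_initSeg hlamκ, ← e] at hlam
  · rw [Λ.d_seg, Λ.d_seg, hdκ]
    funext i
    simp only [Pi.sup_apply, Pi.add_apply, Pi.sub_apply]
    omega
  · rw [Λ.seg_eq_of_eq_comp _ (eκ.trans (Λ.comp_assoc hρ hρθ hθ
      (hρ.trans (Λ.r_comp ρ θ hρθ).symm)))]
    exact Λ.initSeg_comp ρ θ hρθ
  · exact Λ.initSeg_seg κ hPQ hQR le_rfl

section

variable {Λ}

lemma IsFE.ext (hFA : Λ.FinitelyAligned) {μ : Λ.Mor} {E : Set Λ.Mor} (hE : Λ.IsFE (Λ.r μ) E) :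
    Λ.IsFE (Λ.s μ) (Λ.Ext μ E) := by
  refine ⟨Λ.ext_finite hFA μ hE.1, fun τ hτ => hτ.1.symm, fun ρ hρ => ?_⟩
  obtain ⟨lam, hlam, κ, hκ⟩ := hE.2.2 (Λ.comp μ ρ hρ.symm) (Λ.r_comp _ _ _)
  obtain ⟨τ, ⟨h, hmce⟩, hρτ⟩ := Λ.exists_mem_ext_mce_nonempty hρ.symm hκ
  exact ⟨τ, ⟨h, lam, hlam, hmce⟩, hρτ⟩

end

lemma exists_initSeg_seg_mem {lam : Λ.Mor} {a : Fin k → ℕ} (ha : a ≤ Λ.d lam) {F : Set Λ.Mor}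
    (hF : Λ.IsFE (Λ.r (Λ.seg lam a (Λ.d lam) ha le_rfl)) F) :
    ∃ lam', Λ.InitSeg lam lam' ∧
      ∃ (p : Fin k → ℕ) (hp : a + p ≤ Λ.d lam'), Λ.seg lam' a (a + p) le_self_add hp ∈ F := by
  obtain ⟨β, hβF, -, -, ⟨ρ, hρ, eρ⟩, ⟨θ, hθ, rfl⟩⟩ := hF.2.2 _ rfl
  obtain ⟨h, e⟩ := Λ.seg_comp lam zero_le ha le_rfl
  rw [Λ.seg_zero_of_initSeg (Λ.initSeg_refl lam)] at e
  set ν := Λ.seg lam 0 a zero_le ha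
  set μ := Λ.seg lam a (Λ.d lam) ha le_rfl
  -- `lam = νμ`, and a common extension `μρ = βθ` gives `lam ρ = νβθ`
  have hνβ : Λ.s ν = Λ.r β := by rw [h, ← Λ.r_comp μ ρ hρ, ← eρ, Λ.r_comp]
  have hβθ : Λ.s ν = Λ.r (Λ.comp β θ hθ) := hνβ.trans (Λ.r_comp β θ hθ).symm
  have hinit : Λ.InitSeg lam (Λ.comp ν (Λ.comp β θ hθ) hβθ) := by
    refine ⟨ρ, e ▸ (Λ.s_comp ν μ h).trans hρ, ?_⟩
    calc Λ.comp ν (Λ.comp β θ hθ) hβθ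
        = Λ.comp ν (Λ.comp μ ρ hρ) (h.trans (Λ.r_comp μ ρ hρ).symm) :=
          Λ.comp_congr rfl eρ _ _
      _ = Λ.comp (Λ.comp ν μ h) ρ ((Λ.s_comp ν μ h).trans hρ) :=
          (Λ.comp_assoc h hρ _ _).symm
      _ = _ := Λ.comp_congr e rfl _ _
  have hseg := (Λ.isSeg_comp_right ν β hνβ).of_initSeg
    ⟨θ, (Λ.s_comp ν β hνβ).trans hθ, (Λ.comp_assoc hνβ hθ _ hβθ).symm⟩
  rw [Λ.d_seg, tsub_zero] at hseg
  exact ⟨_, hinit, Λ.d β, hseg.le_d le_self_add, (hseg.seg_eq _ _).symm ▸ hβF⟩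

namespace InfPath

variable {Λ}

lemma le_deg_of_le {x : Λ.InfPath} {p q : Fin k → ℕ} (hpq : p ≤ q)
    (hq : ∀ i, (q i : ℕ∞) ≤ x.deg i) : ∀ i, (p i : ℕ∞) ≤ x.deg i :=
  fun i => (Nat.cast_le.2 (hpq i)).trans (hq i)

lemma sup_le_deg {x : Λ.InfPath} {p q : Fin k → ℕ} (hp : ∀ i, (p i : ℕ∞) ≤ x.deg i)
    (hq : ∀ i, (q i : ℕ∞) ≤ x.deg i) : ∀ i, ((p ⊔ q) i : ℕ∞) ≤ x.deg i := fun i => by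
  rw [Pi.sup_apply, Nat.mono_cast.map_max]
  exact max_le (hp i) (hq i)

lemma le_deg_shift_iff {x : Λ.InfPath} {a : Fin k → ℕ} (ha : ∀ i, (a i : ℕ∞) ≤ x.deg i)
    {b : Fin k → ℕ} :
    (∀ i, (b i : ℕ∞) ≤ (x.shift a ha).deg i) ↔ ∀ i, ((a + b) i : ℕ∞) ≤ x.deg i := by
  refine forall_congr' fun i => ?_
  rw [Pi.add_apply, Nat.cast_add]
  exact (ENat.addLECancellable_natCast _).le_tsub_iff_left (ha i)

lemma seg_congr (x : Λ.InfPath) {p q p' q' : Fin k → ℕ} (hp : p = p') (hq : q = q')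
    (h₁ : p ≤ q) (h₂ : ∀ i, (q i : ℕ∞) ≤ x.deg i)
    (h₁' : p' ≤ q') (h₂' : ∀ i, (q' i : ℕ∞) ≤ x.deg i) :
    x.seg p q h₁ h₂ = x.seg p' q' h₁' h₂' := by
  subst hp hq; rfl

lemma seg_zero_shift (x : Λ.InfPath) {a : Fin k → ℕ} (ha : ∀ i, (a i : ℕ∞) ≤ x.deg i)
    {q : Fin k → ℕ} (hq : ∀ i, (q i : ℕ∞) ≤ (x.shift a ha).deg i) :
    (x.shift a ha).seg 0 q zero_le hq = x.seg a (a + q) le_self_add ((le_deg_shift_iff ha).1 hq) :=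
  x.seg_congr (add_zero a) rfl _ _ _ _

lemma r_seg (x : Λ.InfPath) {p q : Fin k → ℕ} (hpq : p ≤ q) (hq : ∀ i, (q i : ℕ∞) ≤ x.deg i) :
    Λ.r (x.seg p q hpq hq) = x.vert p (le_deg_of_le hpq hq) := by
  obtain ⟨h, e⟩ := x.comp_seg p p q le_rfl hpq (le_deg_of_le hpq hq) hq
  rw [← e, Λ.r_comp]
  rfl

lemma r_seg_zero (x : Λ.InfPath) {q : Fin k → ℕ} (hq : ∀ i, (q i : ℕ∞) ≤ x.deg i) :
    Λ.r (x.seg 0 q zero_le hq) = x.rng :=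
  x.r_seg zero_le hq

lemma s_seg (x : Λ.InfPath) {p q : Fin k → ℕ} (hpq : p ≤ q) (hq : ∀ i, (q i : ℕ∞) ≤ x.deg i) :
    Λ.s (x.seg p q hpq hq) = x.vert q hq :=
  (x.comp_seg p q q hpq le_rfl hq hq).1

lemma rng_shift (x : Λ.InfPath) {a : Fin k → ℕ} (ha : ∀ i, (a i : ℕ∞) ≤ x.deg i) :
    (x.shift a ha).rng = x.vert a ha :=
  congrArg Λ.r (x.seg_congr (add_zero a) (add_zero a) _ _ _ _)

lemma initSeg_seg_zero (x : Λ.InfPath) {q Q : Fin k → ℕ} (hqQ : q ≤ Q)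
    (hq : ∀ i, (q i : ℕ∞) ≤ x.deg i) (hQ : ∀ i, (Q i : ℕ∞) ≤ x.deg i) :
    Λ.InitSeg (x.seg 0 q zero_le hq) (x.seg 0 Q zero_le hQ) := by
  obtain ⟨h, e⟩ := x.comp_seg 0 q Q zero_le hqQ hq hQ
  exact ⟨_, h, e.symm⟩

lemma isSeg_seg (x : Λ.InfPath) {p q Q : Fin k → ℕ} (hpq : p ≤ q) (hqQ : q ≤ Q)
    (hq : ∀ i, (q i : ℕ∞) ≤ x.deg i) (hQ : ∀ i, (Q i : ℕ∞) ≤ x.deg i) :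
    Λ.IsSeg (x.seg 0 Q zero_le hQ) p q (x.seg p q hpq hq) := by
  obtain ⟨h, e⟩ := x.comp_seg 0 p q zero_le hpq (le_deg_of_le hpq hq) hq
  refine ⟨x.d_seg _ _ _ _, _, h, by rw [x.d_seg, tsub_zero], ?_⟩
  rw [e]
  exact x.initSeg_seg_zero hqQ hq hQ

lemma seg_eq_of_seg_zero_eq {x y : Λ.InfPath} {Q : Fin k → ℕ}
    {hQ : ∀ i, (Q i : ℕ∞) ≤ x.deg i} {hQ' : ∀ i, (Q i : ℕ∞) ≤ y.deg i}
    (hxy : x.seg 0 Q zero_le hQ = y.seg 0 Q zero_le hQ') {p q : Fin k → ℕ} (hpq : p ≤ q)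
    (hqQ : q ≤ Q) (hq : ∀ i, (q i : ℕ∞) ≤ x.deg i) (hq' : ∀ i, (q i : ℕ∞) ≤ y.deg i) :
    x.seg p q hpq hq = y.seg p q hpq hq' := by
  have hx := x.isSeg_seg hpq hqQ hq hQ
  rw [hxy] at hx
  exact hx.unique (y.isSeg_seg hpq hqQ hq' hQ')

lemma seg_zero_eq_of_initSeg (x : Λ.InfPath) {b : Λ.Mor} {Q : Fin k → ℕ}
    {hQ : ∀ i, (Q i : ℕ∞) ≤ x.deg i} (hb : Λ.InitSeg b (x.seg 0 Q zero_le hQ)) :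
    ∃ h, x.seg 0 (Λ.d b) zero_le h = b := by
  have hbQ : Λ.d b ≤ Q := by simpa only [x.d_seg, tsub_zero] using hb.d_le
  exact ⟨le_deg_of_le hbQ hQ, (x.isSeg_seg zero_le hbQ _ hQ).unique
    (Λ.isSeg_zero_iff.2 ⟨rfl, hb⟩)⟩

lemma ext_of_seg_zero_eq {x y : Λ.InfPath} (hdeg : x.deg = y.deg)
    (hseg : ∀ q (hx : ∀ i, (q i : ℕ∞) ≤ x.deg i) (hy : ∀ i, (q i : ℕ∞) ≤ y.deg i),
      x.seg 0 q zero_le hx = y.seg 0 q zero_le hy) : x = y := by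
  cases x with | mk dx sx _ _ =>
  cases y with | mk dy sy _ _ =>
  obtain rfl : dx = dy := hdeg
  obtain rfl : sx = sy := by
    funext p q hpq hq
    exact seg_eq_of_seg_zero_eq (hseg q hq hq) hpq le_rfl hq hq
  rfl

lemma shift_congr (x : Λ.InfPath) {a a' : Fin k → ℕ} (h : a = a')
    (ha : ∀ i, (a i : ℕ∞) ≤ x.deg i) (ha' : ∀ i, (a' i : ℕ∞) ≤ x.deg i) :
    x.shift a ha = x.shift a' ha' := by
  subst h; rfl

lemma shift_shift (x : Λ.InfPath) {a b : Fin k → ℕ} (ha : ∀ i, (a i : ℕ∞) ≤ x.deg i)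
    (hb : ∀ i, (b i : ℕ∞) ≤ (x.shift a ha).deg i) :
    (x.shift a ha).shift b hb = x.shift (a + b) ((le_deg_shift_iff ha).1 hb) := by
  refine ext_of_seg_zero_eq ?_ fun q _ _ =>
    (x.seg_congr (add_assoc a b 0) (add_assoc a b q) _ _ _ _).symm
  funext i
  show x.deg i - (a i : ℕ∞) - (b i : ℕ∞) = x.deg i - ((a i + b i : ℕ) : ℕ∞)
  rw [Nat.cast_add, tsub_tsub]

lemma extendsBy_shift (x : Λ.InfPath) (a : Fin k → ℕ) (ha : ∀ i, (a i : ℕ∞) ≤ x.deg i) :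
    x.ExtendsBy (x.shift a ha) (x.seg 0 a zero_le ha) := by
  have hd : Λ.d (x.seg 0 a zero_le ha) = a := by rw [x.d_seg, tsub_zero]
  exact ⟨le_deg_of_le hd.le ha, x.seg_congr rfl hd _ _ _ _, x.shift_congr hd _ _⟩

section ExtendsBy

variable {w z : Λ.InfPath} {lam : Λ.Mor}

lemma ExtendsBy.seg_zero_eq (hw : w.ExtendsBy z lam) {q : Fin k → ℕ} (hq : Λ.d lam = q)
    (hq' : ∀ i, (q i : ℕ∞) ≤ w.deg i) : w.seg 0 q zero_le hq' = lam := by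
  obtain ⟨h, e, -⟩ := hw
  subst hq
  exact e

lemma ExtendsBy.eq_shift (hw : w.ExtendsBy z lam) {a : Fin k → ℕ} (ha : Λ.d lam = a)
    (ha' : ∀ i, (a i : ℕ∞) ≤ w.deg i) : z = w.shift a ha' := by
  obtain ⟨h, -, rfl⟩ := hw
  exact w.shift_congr ha _ _

lemma ExtendsBy.rng_eq_r (hw : w.ExtendsBy z lam) : w.rng = Λ.r lam := by
  obtain ⟨h, e, -⟩ := hw
  rw [← e, w.r_seg_zero]

lemma ExtendsBy.rng_eq_s (hw : w.ExtendsBy z lam) : z.rng = Λ.s lam := by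
  obtain ⟨h, e, rfl⟩ := hw
  rw [rng_shift]
  exact (w.s_seg zero_le h).symm.trans (congrArg Λ.s e)

lemma ExtendsBy.deg_eq (hw : w.ExtendsBy z lam) (i : Fin k) :
    w.deg i = Λ.d lam i + z.deg i := by
  obtain ⟨h, -, rfl⟩ := hw
  exact (add_tsub_cancel_of_le (h i)).symm

lemma ExtendsBy.comp {y : Λ.InfPath} {μ α : Λ.Mor} (hμ : w.ExtendsBy y μ)
    (hα : y.ExtendsBy z α) (h : Λ.s μ = Λ.r α) : w.ExtendsBy z (Λ.comp μ α h) := by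
  obtain ⟨hμw, eμ, rfl⟩ := hμ
  obtain ⟨hαy, eα, rfl⟩ := hα
  have hd := Λ.d_comp μ α h
  have hle := (le_deg_shift_iff hμw).1 hαy
  refine ⟨by rw [hd]; exact hle, ?_, ?_⟩
  · obtain ⟨h', e⟩ := w.comp_seg 0 (Λ.d μ) (Λ.d μ + Λ.d α) zero_le le_self_add hμw hle
    rw [w.seg_congr rfl hd _ _ zero_le hle, ← e]
    exact Λ.comp_congr eμ ((w.seg_zero_shift hμw hαy).symm.trans eα) _ _
  · rw [shift_shift]
    exact w.shift_congr hd _ _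

lemma ExtendsBy.of_comp {μ α : Λ.Mor} {h : Λ.s μ = Λ.r α}
    (hw : w.ExtendsBy z (Λ.comp μ α h)) : ∃ y, w.ExtendsBy y μ ∧ y.ExtendsBy z α := by
  obtain ⟨hle, e, rfl⟩ := hw
  have hd := Λ.d_comp μ α h
  have hle' : ∀ i, ((Λ.d μ + Λ.d α) i : ℕ∞) ≤ w.deg i := by rw [← hd]; exact hle
  have hμw := le_deg_of_le le_self_add hle'
  have e' : w.seg 0 (Λ.d μ + Λ.d α) zero_le hle' = Λ.comp μ α h :=
    (w.seg_congr rfl hd.symm _ _ _ _).trans e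
  refine ⟨w.shift (Λ.d μ) hμw, ⟨hμw, ?_, rfl⟩, (le_deg_shift_iff hμw).2 hle', ?_, ?_⟩
  · have hinit := Λ.initSeg_comp μ α h
    rw [← e'] at hinit
    exact (w.seg_zero_eq_of_initSeg hinit).2
  · have hseg := w.isSeg_seg le_self_add le_rfl hle' hle'
    rw [e'] at hseg
    rw [w.seg_zero_shift]
    exact hseg.unique (Λ.isSeg_comp_right μ α h)
  · rw [shift_shift]
    exact w.shift_congr hd.symm _ _

lemma ExtendsBy.seg_zero_add (hw : w.ExtendsBy z lam) {b : Fin k → ℕ}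
    (hb : ∀ i, (b i : ℕ∞) ≤ z.deg i) :
    ∃ (h : Λ.s lam = Λ.r (z.seg 0 b zero_le hb))
      (hq : ∀ i, ((Λ.d lam + b) i : ℕ∞) ≤ w.deg i),
      w.seg 0 (Λ.d lam + b) zero_le hq = Λ.comp lam (z.seg 0 b zero_le hb) h := by
  have h : Λ.s lam = Λ.r (z.seg 0 b zero_le hb) := by rw [z.r_seg_zero, hw.rng_eq_s]
  have hc := hw.comp (z.extendsBy_shift b hb) h
  have hd : Λ.d (Λ.comp lam (z.seg 0 b zero_le hb) h) = Λ.d lam + b := by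
    rw [Λ.d_comp, z.d_seg, tsub_zero]
  have hq : ∀ i, ((Λ.d lam + b) i : ℕ∞) ≤ w.deg i := by rw [← hd]; exact hc.fst
  exact ⟨h, hq, hc.seg_zero_eq hd hq⟩

lemma ExtendsBy.unique {w' : Λ.InfPath} (hw : w.ExtendsBy z lam) (hw' : w'.ExtendsBy z lam) :
    w = w' := by
  refine ext_of_seg_zero_eq (funext fun i => by rw [hw.deg_eq, hw'.deg_eq]) fun q hq hq' => ?_
  have hQ : Λ.d lam + (q ⊔ Λ.d lam - Λ.d lam) = q ⊔ Λ.d lam :=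
    add_tsub_cancel_of_le le_sup_right
  have hb : ∀ i, ((q ⊔ Λ.d lam - Λ.d lam) i : ℕ∞) ≤ z.deg i := by
    rw [hw.eq_shift rfl hw.fst, le_deg_shift_iff, hQ]
    exact sup_le_deg hq hw.fst
  obtain ⟨_, _, e⟩ := hw.seg_zero_add hb
  obtain ⟨_, _, e'⟩ := hw'.seg_zero_add hb
  exact seg_eq_of_seg_zero_eq (e.trans e'.symm) zero_le (by rw [hQ]; exact le_sup_left) hq hq'

end ExtendsBy

end InfPath

def MeetsFE (x : Λ.InfPath) : Prop :=
  ∀ E : Set Λ.Mor, Λ.IsFE x.rng E →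
    ∃ (p : Fin k → ℕ) (hp : ∀ i, (p i : ℕ∞) ≤ x.deg i), x.seg 0 p zero_le hp ∈ E

section

variable {Λ}

lemma isBoundary_iff_meetsFE_shift {x : Λ.InfPath} :
    Λ.IsBoundary x ↔ ∀ n hn, Λ.MeetsFE (x.shift n hn) := by
  refine forall₂_congr fun n hn => ?_
  rw [MeetsFE, InfPath.rng_shift]
  refine forall₂_congr fun E _ => ⟨?_, ?_⟩
  · rintro ⟨p, hp, hmem⟩
    exact ⟨p, (InfPath.le_deg_shift_iff hn).2 hp, by rwa [InfPath.seg_zero_shift]⟩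
  · rintro ⟨p, hp, hmem⟩
    exact ⟨p, (InfPath.le_deg_shift_iff hn).1 hp, by rwa [InfPath.seg_zero_shift] at hmem⟩

lemma MeetsFE.of_extendsBy (hFA : Λ.FinitelyAligned) {w y : Λ.InfPath} {μ : Λ.Mor}
    (hy : Λ.MeetsFE y) (hw : w.ExtendsBy y μ) : Λ.MeetsFE w := by
  intro E hE
  rw [hw.rng_eq_r] at hE
  have hext := hE.ext hFA
  rw [← hw.rng_eq_s] at hext
  obtain ⟨p, hp, _, lam, hlam, -, -, hinit⟩ := hy _ hext
  obtain ⟨_, _, e⟩ := hw.seg_zero_add hp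
  rw [← e] at hinit
  obtain ⟨hlam', e'⟩ := w.seg_zero_eq_of_initSeg hinit
  exact ⟨Λ.d lam, hlam', by rwa [e']⟩

lemma IsBoundary.of_extendsBy (hFA : Λ.FinitelyAligned) {w z : Λ.InfPath} {lam : Λ.Mor}
    (hz : Λ.IsBoundary z) (hw : w.ExtendsBy z lam) : Λ.IsBoundary w := by
  rw [isBoundary_iff_meetsFE_shift] at hz ⊢
  intro n hn
  obtain ⟨hlam, -, rfl⟩ := hw
  -- with `N = n ⊔ d lam`: `σ^n w = w(n, N) σ^N w` and `σ^N w = σ^(N - d lam) z`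
  have hN := InfPath.sup_le_deg hn hlam
  have hn' : ∀ i, ((n ⊔ Λ.d lam - n) i : ℕ∞) ≤ (w.shift n hn).deg i := by
    rw [InfPath.le_deg_shift_iff, add_tsub_cancel_of_le le_sup_left]
    exact hN
  have hlam' : ∀ i, ((n ⊔ Λ.d lam - Λ.d lam) i : ℕ∞) ≤ (w.shift (Λ.d lam) hlam).deg i := by
    rw [InfPath.le_deg_shift_iff, add_tsub_cancel_of_le le_sup_right]
    exact hN
  have e : (w.shift n hn).shift _ hn' = (w.shift (Λ.d lam) hlam).shift _ hlam' := by
    rw [InfPath.shift_shift, InfPath.shift_shift]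
    exact w.shift_congr (by rw [add_tsub_cancel_of_le le_sup_left,
      add_tsub_cancel_of_le le_sup_right]) _ _
  have hext := (w.shift n hn).extendsBy_shift _ hn'
  rw [e] at hext
  exact (hz _ hlam').of_extendsBy hFA hext

end

section Chain

variable {Λ} (L : ℕ → Λ.Mor)

noncomputable def chainDeg : Fin k → ℕ∞ := fun c => ⨆ j, (Λ.d (L j) c : ℕ∞)

lemma exists_le_d_of_le_chainDeg (hL : ∀ ⦃i j⦄, i ≤ j → Λ.InitSeg (L i) (L j))
    {q : Fin k → ℕ} (hq : ∀ c, (q c : ℕ∞) ≤ chainDeg L c) : ∃ j, q ≤ Λ.d (L j) := by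
  choose j hj using fun c => ENat.exists_le_of_natCast_le_iSup (hq c)
  exact ⟨Finset.univ.sup j, fun c =>
    (hj c).trans ((hL (Finset.le_sup (Finset.mem_univ c))).d_le c)⟩

lemma seg_eq_of_chain (hL : ∀ ⦃i j⦄, i ≤ j → Λ.InitSeg (L i) (L j)) {p q : Fin k → ℕ}
    (hpq : p ≤ q) {i j : ℕ} (hi : q ≤ Λ.d (L i)) (hj : q ≤ Λ.d (L j)) :
    Λ.seg (L i) p q hpq hi = Λ.seg (L j) p q hpq hj := by
  rcases le_total i j with hij | hji
  · exact Λ.seg_eq_of_initSeg (hL hij) hpq hi hj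
  · exact (Λ.seg_eq_of_initSeg (hL hji) hpq hj hi).symm

noncomputable def chainPath (hL : ∀ ⦃i j⦄, i ≤ j → Λ.InitSeg (L i) (L j)) : Λ.InfPath where
  deg := chainDeg L
  seg p q hpq hq := Λ.seg (L (exists_le_d_of_le_chainDeg L hL hq).choose) p q hpq
    (exists_le_d_of_le_chainDeg L hL hq).choose_spec
  d_seg _ _ _ _ := Λ.d_seg _ _ _ _ _
  comp_seg p q r hpq hqr hq hr := by
    have hr' := (exists_le_d_of_le_chainDeg L hL hr).choose_spec
    obtain ⟨h, e⟩ := Λ.seg_comp _ hpq hqr hr'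
    have e' := seg_eq_of_chain L hL hpq (exists_le_d_of_le_chainDeg L hL hq).choose_spec
      (hqr.trans hr')
    exact ⟨(congrArg Λ.s e').trans h, (Λ.comp_congr e' rfl _ _).trans e⟩

variable (hL : ∀ ⦃i j⦄, i ≤ j → Λ.InitSeg (L i) (L j))

lemma le_deg_chainPath (j : ℕ) : ∀ c, (Λ.d (L j) c : ℕ∞) ≤ (chainPath L hL).deg c :=
  fun c => le_iSup (fun j => (Λ.d (L j) c : ℕ∞)) j

lemma chainPath_seg {p q : Fin k → ℕ} (hpq : p ≤ q)
    (hq : ∀ c, (q c : ℕ∞) ≤ (chainPath L hL).deg c) {j : ℕ} (hj : q ≤ Λ.d (L j)) :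
    (chainPath L hL).seg p q hpq hq = Λ.seg (L j) p q hpq hj :=
  seg_eq_of_chain L hL hpq (exists_le_d_of_le_chainDeg L hL hq).choose_spec hj

lemma rng_chainPath : (chainPath L hL).rng = Λ.r (L 0) := by
  rw [InfPath.rng, chainPath_seg L hL le_rfl _ (zero_le : 0 ≤ Λ.d (L 0)), Λ.r_seg_zero]

end Chain

lemma exists_isBoundary_rng_eq (v : Λ.Obj) : ∃ x : Λ.InfPath, Λ.IsBoundary x ∧ x.rng = v := by
  classical
  have := Λ.countableMor
  obtain ⟨g, hg⟩ := exists_seq_infinite_fiber ((Fin k → ℕ) × Finset Λ.Mor)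
  have hstep : ∀ (lam : Λ.Mor) (a : (Fin k → ℕ) × Finset Λ.Mor), ∃ lam', Λ.InitSeg lam lam' ∧
      ∀ h : a.1 ≤ Λ.d lam, Λ.IsFE (Λ.r (Λ.seg lam a.1 (Λ.d lam) h le_rfl)) ↑a.2 →
        ∃ (p : Fin k → ℕ) (hp : a.1 + p ≤ Λ.d lam'),
          Λ.seg lam' a.1 (a.1 + p) le_self_add hp ∈ (a.2 : Set Λ.Mor) := by
    intro lam a
    by_cases hA : ∃ h : a.1 ≤ Λ.d lam, Λ.IsFE (Λ.r (Λ.seg lam a.1 (Λ.d lam) h le_rfl)) ↑a.2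
    · obtain ⟨h, hF⟩ := hA
      obtain ⟨lam', hinit, hmem⟩ := Λ.exists_initSeg_seg_mem h hF
      exact ⟨lam', hinit, fun _ _ => hmem⟩
    · exact ⟨lam, Λ.initSeg_refl lam, fun h hF => (hA ⟨h, hF⟩).elim⟩
  choose next hnext hsat using hstep
  obtain ⟨L, hL0, hLs⟩ : ∃ L : ℕ → Λ.Mor, L 0 = Λ.id v ∧ ∀ i, L (i + 1) = next (L i) (g i) :=
    ⟨fun i => Nat.rec (Λ.id v) (fun i lam => next lam (g i)) i, rfl, fun _ => rfl⟩
  have hL : ∀ ⦃i j⦄, i ≤ j → Λ.InitSeg (L i) (L j) := fun i j hij => by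
    induction j, hij using Nat.le_induction with
    | base => exact Λ.initSeg_refl _
    | succ j _ ih => exact ih.trans (hLs j ▸ hnext (L j) (g j))
  refine ⟨chainPath L hL, fun n hn E hE => ?_, by rw [rng_chainPath, hL0, Λ.r_id]⟩
  obtain ⟨j, hj⟩ := exists_le_d_of_le_chainDeg L hL hn
  obtain ⟨i, hi, hji⟩ := (hg (n, hE.1.toFinset)).exists_gt j
  have hni : n ≤ Λ.d (L i) := hj.trans (hL hji.le).d_le
  have hv : Λ.r (Λ.seg (L i) n (Λ.d (L i)) hni le_rfl) = (chainPath L hL).vert n hn := by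
    rw [← chainPath_seg L hL hni (le_deg_chainPath L hL i) le_rfl, InfPath.r_seg]
  have hsat' := hsat (L i) (g i)
  rw [← hLs i, hi] at hsat'
  obtain ⟨p, hp, hmem⟩ := hsat' hni (by rwa [Set.Finite.coe_toFinset, hv])
  refine ⟨p, InfPath.le_deg_of_le hp (le_deg_chainPath L hL (i + 1)), ?_⟩
  rw [chainPath_seg L hL _ _ hp]
  exact (Set.Finite.mem_toFinset hE.1).1 (Finset.mem_coe.1 hmem)

/-- If `Λ` has local periodicity `m, n` at `v`, then there exist
`μ, ν, α` with `r(μ) = r(ν) = v`, `s(μ) = s(ν) = r(α)`, `d(μ) = m`,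
`d(ν) = n`, and `μαz = ναz` for every boundary path `z` with
`r(z) = s(α)`. -/
theorem local_periodicity_witnesses (hFA : Λ.FinitelyAligned)
    (m n : Fin k → ℕ) (v : Λ.Obj) (hlp : Λ.LocalPeriodicity m n v) :
    ∃ (μ ν α : Λ.Mor) (h1 : Λ.s μ = Λ.r α) (h2 : Λ.s ν = Λ.r α),
      Λ.r μ = v ∧ Λ.r ν = v ∧ Λ.d μ = m ∧ Λ.d ν = n ∧
      ∀ z w₁ w₂ : Λ.InfPath, Λ.IsBoundary z → z.rng = Λ.s α →
        w₁.ExtendsBy z (Λ.comp μ α h1) → w₂.ExtendsBy z (Λ.comp ν α h2) →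
        w₁ = w₂ := by
  obtain ⟨x, hx, rfl⟩ := Λ.exists_isBoundary_rng_eq v
  obtain ⟨hmn, hm, hn, hshift⟩ := hlp x hx rfl
  obtain ⟨h₁, e₁⟩ := x.comp_seg 0 m (m ⊔ n) zero_le le_sup_left hm hmn
  have h₂ : Λ.s (x.seg 0 n zero_le hn) = Λ.r (x.seg m (m ⊔ n) le_sup_left hmn) := by
    rw [x.s_seg, x.r_seg, ← x.rng_shift hm, hshift, x.rng_shift]
  have hd : Λ.d (Λ.comp _ _ h₁) = m ⊔ n := by
    rw [Λ.d_comp, x.d_seg, x.d_seg, tsub_zero, add_tsub_cancel_of_le le_sup_left]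
  refine ⟨_, _, _, h₁, h₂, x.r_seg_zero hm, x.r_seg_zero hn, by rw [x.d_seg, tsub_zero],
    by rw [x.d_seg, tsub_zero], fun z w₁ w₂ hz _ hw₁ hw₂ => ?_⟩
  obtain ⟨hmn₁, hm₁, hn₁, hshift₁⟩ := hlp w₁ (hz.of_extendsBy hFA hw₁)
    (hw₁.rng_eq_r.trans ((Λ.r_comp _ _ _).trans (x.r_seg_zero hm)))
  obtain ⟨y, hμ, hα⟩ := hw₁.of_comp
  rw [hμ.eq_shift (by rw [x.d_seg, tsub_zero]) hm₁, hshift₁] at hα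
  have hν : w₁.seg 0 n zero_le hn₁ = x.seg 0 n zero_le hn :=
    InfPath.seg_eq_of_seg_zero_eq ((hw₁.seg_zero_eq hd hmn₁).trans e₁) zero_le le_sup_right hn₁ hn
  have hext := w₁.extendsBy_shift n hn₁
  rw [hν] at hext
  exact (hext.comp hα h₂).unique hw₂

end KGraph
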